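/- Any code C ⊆ F_2^n × F_2^n whose distinct elements have pairwise asymmetric Lee distance (λ=1) at least 2 satisfies |C| ≤ 2^{2n−1} + 2^{n−1}. Consequently A_{λ=1}(n,2) = 2^{2n−1} + 2^{n−1}. -/

import Mathlib

open Finset

def ind (p : Prop) [Decidable p] : ℤ := if p then 1 else 0

def aldSym (lam : ℕ) (a b c d : Bool) : ℤ :=
  (1 + lam) * (ind (a = b) + ind (c = d))
    + lam * ind (a = !b ∧ !b = !c ∧ !c = d)
    - 2 * (1 + lam) * ind (a = b ∧ b = c ∧ c = d)

def ALD (lam n : ℕ) (x y : (Fin n → Bool) × (Fin n → Bool)) : ℤ :=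
  ∑ i, aldSym lam (x.1 i) (x.2 i) (y.1 i) (y.2 i)

def wt {n : ℕ} (a b : Fin n → Bool) : ℕ :=
  (Finset.univ.filter fun i => a i ≠ b i).card

/-! A pair `(a, b)` with `a ≠ b` is at distance 1 from the pair obtained by swapping `a` and `b`
in the first coordinate where they differ. This swap is a fixed-point-free involution of the
`2^{2n} - 2^n` off-diagonal pairs, so a code of minimum distance 2 contains at most half of them,
besides at most all `2^n` diagonal pairs `(a, a)`.

Conversely, distance 1 only occurs between pairs related by such a swap in a single coordinate,
which changes the number of `(1, 0)` coordinates by one. Hence the pairs with an even number of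
`(1, 0)` coordinates form a code of minimum distance 2; it contains the whole diagonal and, by the
same involution, exactly half of the off-diagonal pairs. -/

section Involution

variable {α : Type*} [DecidableEq α] {σ : α → α} {s t : Finset α}

theorem two_mul_card_le_of_involutive (hσ : Function.Involutive σ) (hts : t ⊆ s)
    (hmaps : ∀ x ∈ t, σ x ∈ s ∧ σ x ∉ t) : 2 * #t ≤ #s := by
  have hle : #t ≤ #(s \ t) :=
    card_le_card_of_injOn σ (fun x hx => mem_sdiff.2 (hmaps x hx)) hσ.injective.injOn
  have := card_sdiff_add_card_eq_card hts
  omega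

theorem two_mul_card_filter_eq_of_involutive (hσ : Function.Involutive σ) (p : α → Prop)
    [DecidablePred p] (hs : ∀ x ∈ s, σ x ∈ s) (hp : ∀ x ∈ s, (p (σ x) ↔ ¬ p x)) :
    2 * #(s.filter p) = #s := by
  have hpos := two_mul_card_le_of_involutive hσ (filter_subset p s) fun x hx => by
    simp only [mem_filter] at hx ⊢
    exact ⟨hs x hx.1, fun h => (hp x hx.1).1 h.2 hx.2⟩
  have hneg := two_mul_card_le_of_involutive hσ (filter_subset (fun x => ¬ p x) s) fun x hx => by
    simp only [mem_filter] at hx ⊢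
    exact ⟨hs x hx.1, fun h => h.2 ((hp x hx.1).2 hx.2)⟩
  have := card_filter_add_card_filter_not (s := s) p
  omega

end Involution

section Flip

variable {ι : Type*} [Fintype ι]

def diffSet (x : (ι → Bool) × (ι → Bool)) : Finset ι :=
  univ.filter fun i => x.1 i ≠ x.2 i

def oneZeroParity (x : (ι → Bool) × (ι → Bool)) : ZMod 2 :=
  ∑ i, if x.1 i = true ∧ x.2 i = false then 1 else 0

theorem diffSet_nonempty_iff {x : (ι → Bool) × (ι → Bool)} :
    (diffSet x).Nonempty ↔ x.1 ≠ x.2 := by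
  simp [diffSet, Finset.Nonempty, funext_iff]

theorem oneZeroParity_of_fst_eq_snd {x : (ι → Bool) × (ι → Bool)} (h : x.1 = x.2) :
    oneZeroParity x = 0 :=
  sum_eq_zero fun i _ => by simp [h]

variable [DecidableEq ι]

-- Where `x.1 j ≠ x.2 j`, flipping both bits swaps them.
def flipAt (j : ι) (x : (ι → Bool) × (ι → Bool)) : (ι → Bool) × (ι → Bool) :=
  (Function.update x.1 j (!x.1 j), Function.update x.2 j (!x.2 j))

theorem diffSet_flipAt (j : ι) (x : (ι → Bool) × (ι → Bool)) :
    diffSet (flipAt j x) = diffSet x := by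
  refine filter_congr fun i _ => ?_
  rcases eq_or_ne i j with rfl | hij
  · simp [flipAt]
  · simp [flipAt, hij]

theorem oneZeroParity_flipAt {j : ι} {x : (ι → Bool) × (ι → Bool)} (h : x.1 j ≠ x.2 j) :
    oneZeroParity (flipAt j x) = oneZeroParity x + 1 := by
  rw [← sub_eq_iff_eq_add', oneZeroParity, oneZeroParity, ← sum_sub_distrib,
    sum_eq_single j (fun i _ hij => by simp [flipAt, hij]) (by simp)]
  revert h
  simp only [flipAt, Function.update_self]
  cases x.1 j <;> cases x.2 j <;> decide

variable [LinearOrder ι]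

def pairFlip (x : (ι → Bool) × (ι → Bool)) : (ι → Bool) × (ι → Bool) :=
  if h : (diffSet x).Nonempty then flipAt ((diffSet x).min' h) x else x

theorem pairFlip_involutive : Function.Involutive (pairFlip (ι := ι)) := by
  intro x
  by_cases h : (diffSet x).Nonempty
  · simp only [pairFlip, dif_pos h, diffSet_flipAt]
    simp [flipAt]
  · simp [pairFlip, h]

theorem exists_pairFlip_eq_flipAt {x : (ι → Bool) × (ι → Bool)} (h : x.1 ≠ x.2) :
    ∃ j, x.1 j ≠ x.2 j ∧ pairFlip x = flipAt j x := by
  have hne := diffSet_nonempty_iff.2 h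
  exact ⟨_, (mem_filter.1 ((diffSet x).min'_mem hne)).2, dif_pos hne⟩

theorem pairFlip_fst_ne_snd {x : (ι → Bool) × (ι → Bool)} (h : x.1 ≠ x.2) :
    (pairFlip x).1 ≠ (pairFlip x).2 := by
  obtain ⟨j, -, hσ⟩ := exists_pairFlip_eq_flipAt h
  rwa [← diffSet_nonempty_iff, hσ, diffSet_flipAt, diffSet_nonempty_iff]

theorem oneZeroParity_pairFlip {x : (ι → Bool) × (ι → Bool)} (h : x.1 ≠ x.2) :
    oneZeroParity (pairFlip x) = oneZeroParity x + 1 := by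
  obtain ⟨j, hj, hσ⟩ := exists_pairFlip_eq_flipAt h
  rw [hσ, oneZeroParity_flipAt hj]

end Flip

theorem aldSym_self (lam : ℕ) (a b : Bool) : aldSym lam a b a b = 0 := by
  cases a <;> cases b <;> simp [aldSym, ind] <;> ring

theorem aldSym_nonneg (lam : ℕ) (a b c d : Bool) : 0 ≤ aldSym lam a b c d := by
  cases a <;> cases b <;> cases c <;> cases d <;> simp [aldSym, ind] <;> omega

theorem aldSym_one_eq_zero_iff (a b c d : Bool) : aldSym 1 a b c d = 0 ↔ a = c ∧ b = d := by
  decide +revert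

theorem aldSym_one_eq_one_iff (a b c d : Bool) :
    aldSym 1 a b c d = 1 ↔ a ≠ b ∧ c = !a ∧ d = !b := by
  decide +revert

section ALD

variable {n : ℕ}

theorem ALD_self (lam : ℕ) (x : (Fin n → Bool) × (Fin n → Bool)) : ALD lam n x x = 0 :=
  sum_eq_zero fun _ _ => aldSym_self lam _ _

theorem ALD_flipAt {j : Fin n} {x : (Fin n → Bool) × (Fin n → Bool)} (h : x.1 j ≠ x.2 j) :
    ALD 1 n x (flipAt j x) = 1 := by
  rw [ALD, sum_eq_single j (fun i _ hij => by simp [flipAt, hij, aldSym_self]) (by simp)]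
  simpa [flipAt, aldSym_one_eq_one_iff] using h

theorem ALD_pairFlip {x : (Fin n → Bool) × (Fin n → Bool)} (h : x.1 ≠ x.2) :
    ALD 1 n x (pairFlip x) = 1 := by
  obtain ⟨j, hj, hσ⟩ := exists_pairFlip_eq_flipAt h
  rw [hσ, ALD_flipAt hj]

theorem one_le_ALD_of_ne {x y : (Fin n → Bool) × (Fin n → Bool)} (h : x ≠ y) :
    1 ≤ ALD 1 n x y := by
  obtain ⟨i, hi⟩ : ∃ i, ¬(x.1 i = y.1 i ∧ x.2 i = y.2 i) := by
    by_contra! h_all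
    exact h (Prod.ext (funext fun i => (h_all i).1) (funext fun i => (h_all i).2))
  have hpos : 1 ≤ aldSym 1 (x.1 i) (x.2 i) (y.1 i) (y.2 i) :=
    lt_of_le_of_ne (aldSym_nonneg 1 _ _ _ _) (Ne.symm (mt (aldSym_one_eq_zero_iff _ _ _ _).1 hi))
  exact hpos.trans (single_le_sum (fun i _ => aldSym_nonneg 1 _ _ _ _) (mem_univ i))

theorem exists_eq_flipAt_of_ALD_eq_one {x y : (Fin n → Bool) × (Fin n → Bool)}
    (h : ALD 1 n x y = 1) : ∃ j, x.1 j ≠ x.2 j ∧ y = flipAt j x := by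
  set f : Fin n → ℤ := fun i => aldSym 1 (x.1 i) (x.2 i) (y.1 i) (y.2 i)
  have hsum : ∑ i, f i = 1 := h
  have hf : ∀ i, 0 ≤ f i := fun i => aldSym_nonneg 1 _ _ _ _
  obtain ⟨j, -, hj⟩ := exists_ne_zero_of_sum_ne_zero (s := univ) (f := f) (by omega)
  have hsplit : f j + ∑ i ∈ univ.erase j, f i = 1 := by rw [add_sum_erase _ _ (mem_univ j), hsum]
  have hrest : 0 ≤ ∑ i ∈ univ.erase j, f i := sum_nonneg fun i _ => hf i
  have hfj : f j = 1 := by have := hf j; omega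
  have hzero : ∀ i ∈ univ.erase j, f i = 0 :=
    (sum_eq_zero_iff_of_nonneg fun i _ => hf i).1 (by omega)
  obtain ⟨hne, h1, h2⟩ := (aldSym_one_eq_one_iff _ _ _ _).1 hfj
  have hoff : ∀ i ≠ j, x.1 i = y.1 i ∧ x.2 i = y.2 i := fun i hij =>
    (aldSym_one_eq_zero_iff _ _ _ _).1 (hzero i (mem_erase.2 ⟨hij, mem_univ i⟩))
  refine ⟨j, hne, Prod.ext (funext fun i => ?_) (funext fun i => ?_)⟩ <;>
    rcases eq_or_ne i j with rfl | hij
  · simpa [flipAt] using h1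
  · simp [flipAt, hij, (hoff i hij).1]
  · simpa [flipAt] using h2
  · simp [flipAt, hij, (hoff i hij).2]

theorem two_le_ALD_of_oneZeroParity_eq {x y : (Fin n → Bool) × (Fin n → Bool)} (hxy : x ≠ y)
    (hp : oneZeroParity x = oneZeroParity y) : 2 ≤ ALD 1 n x y := by
  have hne : ALD 1 n x y ≠ 1 := by
    intro h
    obtain ⟨j, hj, rfl⟩ := exists_eq_flipAt_of_ALD_eq_one h
    rw [oneZeroParity_flipAt hj] at hp
    exact one_ne_zero (left_eq_add.1 hp)
  have := one_le_ALD_of_ne hxy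
  omega

end ALD

section Codes

variable {n : ℕ}

theorem card_fst_eq_snd_le (C : Finset ((Fin n → Bool) × (Fin n → Bool))) :
    #(C.filter fun x => x.1 = x.2) ≤ 2 ^ n := by
  calc #(C.filter fun x => x.1 = x.2) ≤ #(univ : Finset (Fin n → Bool)).diag :=
        card_le_card fun x hx => by simpa using (mem_filter.1 hx).2
    _ = 2 ^ n := by simp

theorem card_offDiag_univ : #(univ : Finset (Fin n → Bool)).offDiag = 2 ^ (2 * n) - 2 ^ n := by
  simp [pow_mul', sq]

theorem two_mul_card_le_of_two_le_ALD (C : Finset ((Fin n → Bool) × (Fin n → Bool)))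
    (hC : ∀ x ∈ C, ∀ y ∈ C, x ≠ y → (2 : ℤ) ≤ ALD 1 n x y) :
    2 * #C ≤ 2 ^ (2 * n) + 2 ^ n := by
  have hoff : 2 * #(C.filter fun x => ¬x.1 = x.2) ≤ 2 ^ (2 * n) - 2 ^ n := by
    rw [← card_offDiag_univ]
    refine two_mul_card_le_of_involutive pairFlip_involutive
      (fun x hx => by simpa using (mem_filter.1 hx).2) fun x hx => ?_
    obtain ⟨hxC, hx⟩ := mem_filter.1 hx
    have hdist := ALD_pairFlip hx
    refine ⟨by simpa using pairFlip_fst_ne_snd hx, fun hσC => ?_⟩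
    have hne : x ≠ pairFlip x := fun h => by rw [← h, ALD_self] at hdist; exact zero_ne_one hdist
    have := hC x hxC _ (mem_filter.1 hσC).1 hne
    omega
  have hsplit := card_filter_add_card_filter_not (s := C) fun x => x.1 = x.2
  have hdiag := card_fst_eq_snd_le C
  have : 2 ^ n ≤ 2 ^ (2 * n) := Nat.pow_le_pow_right two_pos (by omega)
  omega

def evenCode (n : ℕ) : Finset ((Fin n → Bool) × (Fin n → Bool)) :=
  univ.filter fun x => oneZeroParity x = 0

theorem two_le_ALD_of_mem_evenCode {x y : (Fin n → Bool) × (Fin n → Bool)} (hx : x ∈ evenCode n)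
    (hy : y ∈ evenCode n) (hxy : x ≠ y) : 2 ≤ ALD 1 n x y :=
  two_le_ALD_of_oneZeroParity_eq hxy (((mem_filter.1 hx).2).trans (mem_filter.1 hy).2.symm)

theorem two_mul_card_evenCode : 2 * #(evenCode n) = 2 ^ (2 * n) + 2 ^ n := by
  have hdiag : (evenCode n).filter (fun x => x.1 = x.2) = univ.diag := by
    ext x
    simp only [evenCode, mem_filter, mem_univ, true_and, mem_diag, and_iff_right_iff_imp]
    exact oneZeroParity_of_fst_eq_snd
  have hoff : (evenCode n).filter (fun x => ¬x.1 = x.2) =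
      univ.offDiag.filter fun x => oneZeroParity x = 0 := by
    ext x
    simp [evenCode, and_comm]
  have hhalf : 2 * #(univ.offDiag.filter fun x : (Fin n → Bool) × _ => oneZeroParity x = 0) =
      2 ^ (2 * n) - 2 ^ n := by
    rw [← card_offDiag_univ]
    refine two_mul_card_filter_eq_of_involutive pairFlip_involutive _
      (fun x hx => by simpa using pairFlip_fst_ne_snd (by simpa using hx)) fun x hx => ?_
    rw [oneZeroParity_pairFlip (by simpa using hx)]
    generalize oneZeroParity x = p
    decide +revert
  have hsplit := card_filter_add_card_filter_not (s := evenCode n) fun x => x.1 = x.2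
  rw [hdiag, hoff] at hsplit
  have : #(univ : Finset (Fin n → Bool)).diag = 2 ^ n := by simp
  have : 2 ^ n ≤ 2 ^ (2 * n) := Nat.pow_le_pow_right two_pos (by omega)
  omega

end Codes

theorem ald_dist_two_optimal (n : ℕ) (hn : 1 ≤ n) :
    (∀ C : Finset ((Fin n → Bool) × (Fin n → Bool)),
      (∀ x ∈ C, ∀ y ∈ C, x ≠ y → (2 : ℤ) ≤ ALD 1 n x y) →
      C.card ≤ 2 ^ (2 * n - 1) + 2 ^ (n - 1)) ∧
    (∃ C : Finset ((Fin n → Bool) × (Fin n → Bool)),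
      (∀ x ∈ C, ∀ y ∈ C, x ≠ y → (2 : ℤ) ≤ ALD 1 n x y) ∧
      C.card = 2 ^ (2 * n - 1) + 2 ^ (n - 1)) := by
  have hbound : 2 * (2 ^ (2 * n - 1) + 2 ^ (n - 1)) = 2 ^ (2 * n) + 2 ^ n := by
    obtain ⟨m, rfl⟩ := Nat.exists_eq_add_of_le' hn
    rw [show 2 * (m + 1) - 1 = 2 * m + 1 by omega, Nat.add_sub_cancel]
    ring
  refine ⟨fun C hC => ?_, evenCode n, fun x hx y hy => two_le_ALD_of_mem_evenCode hx hy, ?_⟩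
  · have := two_mul_card_le_of_two_le_ALD C hC
    omega
  · have := two_mul_card_evenCode (n := n)
    omega
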